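/- arXiv:2010.03086 — 4 statements merged into one kernel-verified Lean document; each statement's English description precedes it below -/
import Mathlib

section
/- Consider the polynomial h(x) = x⁴ + r₂x² + r₁x over ℂ. Then h has exactly one critical value (i.e., all roots of h′ map to the same value under h) if and only if r₁ = 0 and r₂ = 0, in which case h(x) = x⁴. -/
open Polynomial

/-- `h = x⁴ + r₂x² + r₁x` has exactly one critical value iff `r₁ = r₂ = 0`,
in which case `h = x⁴`. -/
theorem stmt_11 (r₁ r₂ : ℂ) (h : ℂ[X])
    (hh : h = X ^ 4 + C r₂ * X ^ 2 + C r₁ * X) :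
    ((∃! v : ℂ, ∃ x : ℂ, (derivative h).eval x = 0 ∧ h.eval x = v) ↔
      (r₁ = 0 ∧ r₂ = 0)) ∧
    (r₁ = 0 → r₂ = 0 → h = X ^ 4) := by
  have hd : derivative h = C 4 * X ^ 3 + C (2 * r₂) * X + C r₁ := by
    rw [hh]; simp [derivative_X_pow]; simp only [map_ofNat]; ring
  have hde : ∀ x : ℂ, (derivative h).eval x = 4 * x ^ 3 + 2 * r₂ * x + r₁ := by
    intro x; rw [hd]; simp
  have hev : ∀ x : ℂ, h.eval x = x ^ 4 + r₂ * x ^ 2 + r₁ * x := by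
    intro x; rw [hh]; simp
  constructor
  · constructor
    · rintro ⟨v, ⟨x₀, hx₀⟩, huniq⟩
      have H : ∀ x y : ℂ, 4*x^3+2*r₂*x+r₁ = 0 → 4*y^3+2*r₂*y+r₁ = 0 →
          x^4+r₂*x^2+r₁*x = y^4+r₂*y^2+r₁*y := by
        intro x y hx hy
        have h1 : h.eval x = v := huniq _ ⟨x, by rw [hde]; exact hx, rfl⟩
        have h2 : h.eval y = v := huniq _ ⟨y, by rw [hde]; exact hy, rfl⟩
        rw [← hev x, ← hev y, h1, h2]
      obtain ⟨a, ha⟩ : ∃ a : ℂ, 4*a^3+2*r₂*a+r₁ = 0 := by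
        have hdeg : (derivative h).degree = 3 := by
          rw [hd]; compute_degree! <;> norm_num
        obtain ⟨a, ha⟩ := Complex.exists_root (f := derivative h) (by rw [hdeg]; norm_num)
        exact ⟨a, by rw [← hde]; exact ha⟩
      obtain ⟨s, hs⟩ : ∃ s : ℂ, s^2 = -48*a^2 - 32*r₂ := by
        have hdeg2 : (X^2 - C (-48*a^2 - 32*r₂) : ℂ[X]).degree = 2 := by
          compute_degree! <;> norm_num
        obtain ⟨s, hs⟩ := Complex.exists_root (f := X^2 - C (-48*a^2 - 32*r₂))
          (by rw [hdeg2]; norm_num)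
        simp only [IsRoot, eval_sub, eval_pow, eval_X, eval_C, sub_eq_zero] at hs
        exact ⟨s, hs⟩
      have hb : 4*((-4*a+s)/8)^3 + 2*r₂*((-4*a+s)/8) + r₁ = 0 := by
        linear_combination ha + ((s - 12*a)/128) * hs
      have hc : 4*((-4*a-s)/8)^3 + 2*r₂*((-4*a-s)/8) + r₁ = 0 := by
        linear_combination ha + ((-s - 12*a)/128) * hs
      have E1 := H _ _ hb hc
      have E2 := H _ _ ha hb
      have D1 : s * (3*r₁ - 2*r₂*a) = 0 := by
        linear_combination 16*E1 - 4*((-4*a+s)/8)*hb + 4*((-4*a-s)/8)*hc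
      have D2 : (12*a - s) * (r₂*(4*a+s) + 12*r₁) = 0 := by
        linear_combination 128*E2 - 32*a*ha + 32*((-4*a+s)/8)*hb
      by_cases hs0 : s = 0
      · subst hs0
        have hA : a ^ 4 = 0 := by
          linear_combination (-1/216)*D2 + (2*a/3)*ha - (5*a^2/144)*hs
        have ha0 : a = 0 := by
          exact pow_eq_zero_iff (by norm_num) |>.mp hA
        subst ha0
        have hr2 : r₂ = 0 := by linear_combination (1/32)*hs
        have hr1 : r₁ = 0 := by linear_combination ha
        exact ⟨hr1, hr2⟩
      · have hr : 3*r₁ - 2*r₂*a = 0 := (mul_eq_zero.mp D1).resolve_left hs0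
        rcases mul_eq_zero.mp D2 with hG | hF
        · exfalso
          have hA : a ^ 3 = 0 := by
            linear_combination (1/36)*hr - (1/12)*ha + (a/144)*hs + (a*(s+12*a)/144)*hG
          have ha0 : a = 0 := by
            exact pow_eq_zero_iff (by norm_num) |>.mp hA
          subst ha0
          apply hs0
          linear_combination -hG
        · have hF' : r₂ * (12*a + s) = 0 := by linear_combination hF - 4*hr
          rcases mul_eq_zero.mp hF' with hr2 | hGs
          · exact ⟨by linear_combination (1/3)*hr + (2*a/3)*hr2, hr2⟩
          · exfalso
            have hA : a ^ 3 = 0 := by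
              linear_combination (1/36)*hr - (1/12)*ha + (a/144)*hs - (a*(s-12*a)/144)*hGs
            have ha0 : a = 0 := by
              exact pow_eq_zero_iff (by norm_num) |>.mp hA
            subst ha0
            apply hs0
            linear_combination hGs
    · rintro ⟨rfl, rfl⟩
      refine ⟨0, ⟨0, ?_, ?_⟩, ?_⟩
      · rw [hde]; ring
      · rw [hev]; ring
      · rintro v ⟨x, hx, rfl⟩
        rw [hde] at hx
        have hx0 : x = 0 := by
          have : x ^ 3 = 0 := by linear_combination (1/4)*hx
          exact pow_eq_zero_iff (by norm_num) |>.mp this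
        subst hx0
        rw [hev]; ring
  · rintro rfl rfl
    rw [hh]; simp
end

section
/- Let h(x) = x⁴ + r₂x² + r₁x over ℂ. If h has exactly two distinct critical values and two of the three critical points (roots of h′, counted with multiplicity) share the same critical value while h′ has three distinct roots, then r₁ = 0; consequently h(x) = x⁴ + r₂x² = h₂(h₁(x)) with h₁(x) = x² and h₂(x) = x(x + r₂), i.e., h is decomposable into two quadratics. -/
open Polynomial

private lemma keylem (r₁ r₂ a b c : ℂ) (hab : a ≠ b)
    (hsum : a + b + c = 0)
    (ec : 4*c^3 + 2*r₂*c + r₁ = 0)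
    (hr2 : r₂ = -2*(a^2 + a*b + b^2))
    (heq : a^4 + r₂*a^2 + r₁*a = b^4 + r₂*b^2 + r₁*b) : r₁ = 0 := by
  have hne : a - b ≠ 0 := sub_ne_zero.mpr hab
  have hc : c = -a - b := by linear_combination hsum
  subst hc; subst hr2
  have h2 : (a-b) * (r₁ - (a+b)^3) = 0 := by linear_combination heq
  have hr1 : r₁ = (a+b)^3 := by
    rcases mul_eq_zero.mp h2 with h | h
    · exact absurd h hne
    · linear_combination h
  have h3 : (a+b) * (a-b)^2 = 0 := by linear_combination ec - hr1
  rcases mul_eq_zero.mp h3 with h | h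
  · rw [hr1]; rw [show a + b = 0 from h]; ring
  · exact absurd (pow_eq_zero_iff (by norm_num)|>.mp h) hne

/-- If `h = x⁴ + r₂x² + r₁x` has three distinct critical points, exactly two
distinct critical values, and two critical points share a critical value,
then `r₁ = 0` and `h = h₂ ∘ h₁` with `h₁ = x²`, `h₂ = x(x + r₂)`. -/
theorem stmt_13 (r₁ r₂ : ℂ) (h : ℂ[X])
    (hh : h = X ^ 4 + C r₂ * X ^ 2 + C r₁ * X)
    (a b c : ℂ) (hab : a ≠ b) (hac : a ≠ c) (hbc : b ≠ c)
    (hfac : derivative h = C 4 * (X - C a) * (X - C b) * (X - C c))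
    (hvals : (h.eval a = h.eval b ∧ h.eval a ≠ h.eval c) ∨
             (h.eval a = h.eval c ∧ h.eval a ≠ h.eval b) ∨
             (h.eval b = h.eval c ∧ h.eval b ≠ h.eval a)) :
    r₁ = 0 ∧ h = (X * (X + C r₂)).comp (X ^ 2) := by
  have hd : derivative h = C 4 * X^3 + C (2*r₂) * X + C r₁ := by
    subst hh
    simp [derivative_X_pow]
    simp only [map_ofNat]
    ring
  rw [hd] at hfac
  -- roots
  have ea : 4*a^3 + 2*r₂*a + r₁ = 0 := by
    have := congrArg (eval a) hfac
    simpa using this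
  have eb : 4*b^3 + 2*r₂*b + r₁ = 0 := by
    have := congrArg (eval b) hfac
    simp [eval_mul] at this
    linear_combination this
  have ec : 4*c^3 + 2*r₂*c + r₁ = 0 := by
    have := congrArg (eval c) hfac
    simp [eval_mul] at this
    linear_combination this
  -- sum of roots = 0
  have hsum : a + b + c = 0 := by
    have hexp : C (4:ℂ) * (X - C a) * (X - C b) * (X - C c) =
        C 4 * X^3 - C (4*(a+b+c)) * X^2 + C (4*(a*b+a*c+b*c)) * X - C (4*(a*b*c)) := by
      simp only [map_mul, map_add, map_ofNat]
      ring
    rw [hexp] at hfac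
    have h2 := congrArg (fun p => coeff p 2) hfac
    simp [coeff_X_pow, coeff_C, coeff_C_mul, mul_assoc, add_mul] at h2
    exact h2
  -- pairwise relations r₂ = -2(x²+xy+y²) for each pair of distinct roots
  have pairr2 : ∀ x y : ℂ, x ≠ y → 4*x^3 + 2*r₂*x + r₁ = 0 →
      4*y^3 + 2*r₂*y + r₁ = 0 → r₂ = -2*(x^2 + x*y + y^2) := by
    intro x y hxy ex ey
    have hne : x - y ≠ 0 := sub_ne_zero.mpr hxy
    have h0 : (x - y) * (2*r₂ + 4*(x^2 + x*y + y^2)) = 0 := by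
      linear_combination ex - ey
    rcases mul_eq_zero.mp h0 with hz | hz
    · exact absurd hz hne
    · linear_combination hz / 2
  have hevals : ∀ x : ℂ, h.eval x = x^4 + r₂*x^2 + r₁*x := by
    intro x; rw [hh]; simp only [eval_add, eval_mul, eval_pow, eval_X, eval_C]
  have hr1 : r₁ = 0 := by
    rcases hvals with ⟨hv, _⟩ | ⟨hv, _⟩ | ⟨hv, _⟩
    · exact keylem r₁ r₂ a b c hab hsum ec (pairr2 a b hab ea eb)
        (by rw [hevals, hevals] at hv; exact hv)
    · exact keylem r₁ r₂ a c b hac (by linear_combination hsum) eb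
        (pairr2 a c hac ea ec) (by rw [hevals, hevals] at hv; exact hv)
    · exact keylem r₁ r₂ b c a hbc (by linear_combination hsum) ea
        (pairr2 b c hbc eb ec) (by rw [hevals, hevals] at hv; exact hv)
  subst hh
  refine ⟨hr1, ?_⟩
  rw [hr1]
  simp
  ring
end

section
/- A polynomial h(x) = x⁴ + r₂x² + r₁x ∈ ℂ[x] is decomposable as h = h₂ ∘ h₁ with deg h₁ = deg h₂ = 2 if and only if r₁ = 0. -/
open Polynomial

lemma quad_eq (p : ℂ[X]) (hp : p.natDegree ≤ 2) :
    p = C (p.coeff 2) * X ^ 2 + C (p.coeff 1) * X + C (p.coeff 0) := by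
  ext n
  rcases lt_or_ge n 3 with h | h
  · interval_cases n <;> simp [coeff_X_pow]
  · rw [p.coeff_eq_zero_of_natDegree_lt (by omega)]
    simp only [coeff_add, coeff_C_mul, coeff_X_pow, coeff_X, coeff_C]
    split_ifs <;> first | omega | simp

/-- `h = x⁴ + r₂x² + r₁x` is decomposable into two quadratics iff `r₁ = 0`. -/
theorem stmt_14 (r₁ r₂ : ℂ) :
    (∃ h₁ h₂ : ℂ[X], h₁.degree = 2 ∧ h₂.degree = 2 ∧
      (X ^ 4 + C r₂ * X ^ 2 + C r₁ * X : ℂ[X]) = h₂.comp h₁) ↔ r₁ = 0 := by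
  constructor
  · rintro ⟨h₁, h₂, hd1, hd2, heq⟩
    set a := h₁.coeff 2 with ha
    set b := h₁.coeff 1 with hb
    set c := h₁.coeff 0 with hc
    set d := h₂.coeff 2 with hdd
    set e := h₂.coeff 1 with he
    have hnd1 : h₁.natDegree = 2 := natDegree_eq_of_degree_eq_some hd1
    have hnd2 : h₂.natDegree = 2 := natDegree_eq_of_degree_eq_some hd2
    have ha0 : a ≠ 0 := by
      rw [ha, ← hnd1]; exact leadingCoeff_ne_zero.mpr (fun h => by simp [h] at hd1)
    have hd0 : d ≠ 0 := by
      rw [hdd, ← hnd2]; exact leadingCoeff_ne_zero.mpr (fun h => by simp [h] at hd2)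
    rw [quad_eq h₁ hnd1.le, quad_eq h₂ hnd2.le] at heq
    simp only [add_comp, mul_comp, C_comp, X_comp, pow_comp] at heq
    have hexp : (X ^ 4 + C r₂ * X ^ 2 + C r₁ * X : ℂ[X]) =
        C (d * a ^ 2) * X ^ 4 + C (2 * d * a * b) * X ^ 3 +
          C (d * (b ^ 2 + 2 * a * c) + e * a) * X ^ 2 +
          C (2 * d * b * c + e * b) * X + C (d * c ^ 2 + e * c + h₂.coeff 0) := by
      rw [heq]
      simp only [map_mul, map_add, map_pow, map_ofNat]
      ring
    have h3 := congrArg (fun p => coeff p 3) hexp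
    have h1 := congrArg (fun p => coeff p 1) hexp
    simp only [coeff_add, coeff_C_mul, coeff_X_pow, coeff_X, coeff_C] at h3 h1
    norm_num at h3 h1
    have hb0 : b = 0 := h3.resolve_left (by simp [ha0, hd0])
    simp [hb0] at h1
    exact h1
  · rintro rfl
    refine ⟨X ^ 2, X ^ 2 + C r₂ * X, ?_, ?_, ?_⟩
    · simpa using degree_X_pow 2
    · compute_degree!
    · simp [add_comp, mul_comp, pow_comp]; ring
end

section
/- Let d ≥ 2 and let the join cycles δᵢʲ (i ∈ {1}, j ∈ {1,…,d−1}) have intersection numbers given by: ⟨δ₁ʲ, δ₁^{j'}⟩ = sgn(j'−j)·⟨σⱼ, σ_{j'}⟩ where ⟨σⱼ, σ_{j'}⟩ ∈ {0, ±1} is nonzero only for |j−j'| = 1 with ⟨σⱼ, σ_{j+1}⟩ = −(−1)^j (alternating). Then the resulting (d−1)×(d−1) intersection matrix Ψ₂ is skew-symmetric, tridiagonal with zero diagonal, and the matrix M₂ = I_{d−1} − Ψ₂ is conjugate by the diagonal matrix diag(−1,1,1,−1,−1,1,1,…) to the tridiagonal matrix with diagonals (−1, 1, 1). -/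
open Matrix

private lemma eps_key (a : ℕ) :
    ((if a % 4 = 0 ∨ a % 4 = 3 then (-1 : ℝ) else 1) *
      (if (a+1) % 4 = 0 ∨ (a+1) % 4 = 3 then (-1 : ℝ) else 1)) = -(-1 : ℝ) ^ a := by
  have h2 : a % 2 = a % 4 % 2 := (Nat.mod_mod_of_dvd a (by norm_num)).symm
  have h4 : a % 4 = 0 ∨ a % 4 = 1 ∨ a % 4 = 2 ∨ a % 4 = 3 := by omega
  rcases h4 with h | h | h | h
  · have he : Even a := Nat.even_iff.mpr (by omega)
    have h1 : (a+1) % 4 = 1 := by omega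
    simp [h, h1, he.neg_one_pow]
  · have he : Odd a := Nat.odd_iff.mpr (by omega)
    have h1 : (a+1) % 4 = 2 := by omega
    simp [h, h1, he.neg_one_pow]
  · have he : Even a := Nat.even_iff.mpr (by omega)
    have h1 : (a+1) % 4 = 3 := by omega
    simp [h, h1, he.neg_one_pow]
  · have he : Odd a := Nat.odd_iff.mpr (by omega)
    have h1 : (a+1) % 4 = 0 := by omega
    simp [h, h1, he.neg_one_pow]

/-- The intersection matrix `Ψ₂` of `y² + x^d` is skew-symmetric and
tridiagonal with zero diagonal, and `M₂ = I − Ψ₂` is conjugate, by the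
diagonal matrix with diagonal `(−1,1,1,−1,−1,1,1,…)`, to the tridiagonal
matrix with main diagonal `1`, subdiagonal `−1` and superdiagonal `1`. -/
theorem stmt_17 (d : ℕ) (hd : 2 ≤ d)
    (Ψ : Matrix (Fin (d-1)) (Fin (d-1)) ℝ)
    (hΨ : ∀ j k : Fin (d-1), Ψ j k =
      if k.val = j.val + 1 then (-1 : ℝ) ^ j.val
      else if j.val = k.val + 1 then -(-1 : ℝ) ^ k.val else 0)
    (D : Matrix (Fin (d-1)) (Fin (d-1)) ℝ)
    (hD : D = Matrix.diagonal (fun m : Fin (d-1) =>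
      if m.val % 4 = 0 ∨ m.val % 4 = 3 then (-1 : ℝ) else 1))
    (T : Matrix (Fin (d-1)) (Fin (d-1)) ℝ)
    (hT : ∀ j k : Fin (d-1), T j k =
      if j = k then 1 else if j.val = k.val + 1 then -1
        else if k.val = j.val + 1 then 1 else 0) :
    Ψᵀ = -Ψ ∧ (∀ j, Ψ j j = 0) ∧
    (∀ j k : Fin (d-1), j.val + 1 < k.val ∨ k.val + 1 < j.val → Ψ j k = 0) ∧
    D * (1 - Ψ) * D⁻¹ = T := by
  refine ⟨?_, ?_, ?_, ?_⟩
  · ext j k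
    simp only [Matrix.transpose_apply, Matrix.neg_apply, hΨ]
    split_ifs <;> first | omega | ring
  · intro j
    rw [hΨ]
    split_ifs <;> first | rfl | omega
  · intro j k h
    rw [hΨ]
    split_ifs <;> first | rfl | omega
  · have hDD : D * D = 1 := by
      rw [hD, Matrix.diagonal_mul_diagonal]
      ext i j
      rcases eq_or_ne i j with rfl | h
      · rw [Matrix.diagonal_apply_eq, Matrix.one_apply_eq]
        split_ifs <;> norm_num
      · rw [Matrix.diagonal_apply_ne _ h, Matrix.one_apply_ne h]
    rw [Matrix.inv_eq_right_inv hDD]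
    ext j k
    rw [hD, hT]
    simp only [Matrix.mul_diagonal, Matrix.diagonal_mul, Matrix.sub_apply,
      Matrix.one_apply, hΨ]
    by_cases hjk : j = k
    · subst hjk
      simp only [if_pos rfl]
      have : ¬ j.val = j.val + 1 := by omega
      rw [if_neg this, if_neg this]
      split_ifs <;> norm_num
    · rw [if_neg hjk, if_neg hjk]
      have hne : j.val ≠ k.val := fun h => hjk (Fin.ext h)
      by_cases h1 : k.val = j.val + 1
      · have h2 : ¬ j.val = k.val + 1 := by omega
        rw [if_pos h1, if_neg h2, if_pos h1, h1]
        have := eps_key j.val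
        rcases Nat.even_or_odd j.val with he | he
        · simp only [he.neg_one_pow] at this ⊢
          nlinarith [this]
        · simp only [he.neg_one_pow] at this ⊢
          nlinarith [this]
      · by_cases h2 : j.val = k.val + 1
        · rw [if_neg h1, if_pos h2, if_neg h1, if_pos h2, h2]
          have := eps_key k.val
          rcases Nat.even_or_odd k.val with he | he
          · simp only [he.neg_one_pow] at this ⊢
            nlinarith [this]
          · simp only [he.neg_one_pow] at this ⊢
            nlinarith [this]
        · rw [if_neg h1, if_neg h2, if_neg h1, if_neg h2]
          ring
end
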